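/- Generalized kernel of −Δ + V in eight dimensions: in the radial setting on ℝ⁸, there exist a radial solution Γ of −Γ'' − (7/r)Γ' + VΓ = 0 on (0,∞) and nonzero constants c, c' with Γ(r) ∼ c r^{−6} as r → 0 and Γ(r) → c' as r → ∞; and there exist radial functions T₁^∞ and T₁⁰ on (0,∞) solving −(T₁^∞)'' − (7/r)(T₁^∞)' + V T₁^∞ = −ΛW and −(T₁⁰)'' − (7/r)(T₁⁰)' + V T₁⁰ = −Γ, together with nonzero constants c^∞_{1,0}, c^∞_{1,∞}, c⁰_{1,0}, c⁰_{1,∞}, e⁰₀, c̃⁰_{0,0}, such that T₁^∞(r) ∼ c^∞_{1,∞} r^{−4} as r → ∞, T₁^∞(r) ∼ c^∞_{1,0} r^{−6} as r → 0, T₁⁰(r) ∼ c⁰_{1,∞} r² as r → ∞, T₁⁰(r) ∼ c⁰_{1,0} r^{−4} as r → 0, and Γ(r) − e⁰₀ T₁^∞(r) ∼ c̃⁰_{0,0} r² as r → 0. -/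

import Mathlib

/-!
All three functions are given in closed form (found by reduction of order from the kernel element
`ΛW` and by variation of constants): each is `(P(r) + Q(r) log r) / (r^a (48 + r²)^m)` with explicit
polynomials `P`, `Q`, the logarithmic parts of `Γ` and `T₁^∞` being `-280 ΛW log r` and
`-40 ΛW log r`. Functions of this shape are closed under `d/dr`, so the three equations reduce to
polynomial identities, and the asymptotics at `0` and `∞` are read off from `P(0)` and from the top
coefficient of `P`. Because the logarithms are in ratio `7`,
`Γ - 7 T₁^∞ = r² (r⁶ + 672 r⁴ - 6967296) / (48 + r²)⁴` has no logarithm and vanishes at `0`.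
-/

open MeasureTheory Real Filter Set Topology

noncomputable section

def W8r (r : ℝ) : ℝ := ((1 + r ^ 2 / 48) ^ 3)⁻¹

def V8r (r : ℝ) : ℝ := -(5 / 3) * W8r r ^ ((2 : ℝ) / 3)

def LW8r (r : ℝ) : ℝ := r * deriv W8r r + 3 * W8r r

open Polynomial

theorem Polynomial.tendsto_eval_div_pow_atTop {P : ℝ[X]} {N : ℕ} (hP : P.natDegree ≤ N) :
    Tendsto (fun r => P.eval r / r ^ N) atTop (𝓝 (P.coeff N)) := by
  have hrefl : Tendsto (fun r : ℝ => (reflect N P).eval r⁻¹) atTop (𝓝 (P.coeff N)) := by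
    simpa [Function.comp_def, ← coeff_zero_eq_eval_zero, coeff_reflect] using
      ((reflect N P).continuous.tendsto 0).comp tendsto_inv_atTop_zero
  refine hrefl.congr' ?_
  filter_upwards [eventually_gt_atTop 0] with r hr
  let := invertibleOfNonzero hr.ne'
  rw [eq_div_iff (by positivity), ← invOf_eq_inv]
  exact eval₂_reflect_mul_pow (RingHom.id ℝ) r N P hP

theorem HasDerivAt.fun_pow_of_ne_zero {𝕜 : Type*} [NontriviallyNormedField 𝕜] {f : 𝕜 → 𝕜}
    {f' x : 𝕜} (hf : HasDerivAt f f' x) (hx : f x ≠ 0) (n : ℕ) :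
    HasDerivAt (fun y => f y ^ n) (n * f x ^ n / f x * f') x := by
  refine (hf.pow n).congr_deriv ?_
  rcases n with _ | n
  · simp
  · rw [Nat.add_sub_cancel]
    field_simp
    ring

theorem V8r_eq (r : ℝ) : V8r r = -3840 / (48 + r ^ 2) ^ 2 := by
  have ht : (0 : ℝ) < 1 + r ^ 2 / 48 := by positivity
  have hW : W8r r ^ ((2 : ℝ) / 3) = ((1 + r ^ 2 / 48) ^ 2)⁻¹ := by
    rw [W8r, ← Real.rpow_natCast _ 3, ← Real.rpow_neg ht.le, ← Real.rpow_mul ht.le]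
    norm_num
  rw [V8r, hW]
  field_simp
  ring

theorem hasDerivAt_W8r (r : ℝ) : HasDerivAt W8r (-(r / 8) / (1 + r ^ 2 / 48) ^ 4) r := by
  have hbase : HasDerivAt (fun x : ℝ => 1 + x ^ 2 / 48) (r / 24) r := by
    refine (((hasDerivAt_pow 2 r).div_const 48).const_add 1).congr_deriv ?_
    norm_num
    ring
  have hb : (1 : ℝ) + r ^ 2 / 48 ≠ 0 := by positivity
  refine ((hbase.fun_pow 3).inv (pow_ne_zero 3 hb)).congr_deriv ?_
  field_simp
  ring

theorem LW8r_eq (r : ℝ) : LW8r r = 331776 * (48 - r ^ 2) / (48 + r ^ 2) ^ 4 := by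
  rw [LW8r, (hasDerivAt_W8r r).deriv, W8r]
  field_simp
  ring

def radialH (f : ℝ → ℝ) (r : ℝ) : ℝ :=
  -(deriv (deriv f) r) - 7 / r * deriv f r + V8r r * f r

section LogFrac

variable (a m : ℕ) (P Q : ℝ[X])

def logFrac (r : ℝ) : ℝ :=
  (P.eval r + Q.eval r * log r) / (r ^ a * (48 + r ^ 2) ^ m)

def logFracDeriv : ℝ[X] × ℝ[X] :=
  let D : ℝ[X] := 48 + X ^ 2
  let E : ℝ[X] := (a : ℝ[X]) * D + 2 * (m : ℝ[X]) * X ^ 2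
  (X * D * derivative P + D * Q - E * P, X * D * derivative Q - E * Q)

theorem hasDerivAt_logFrac {r : ℝ} (hr : 0 < r) :
    HasDerivAt (logFrac a m P Q)
      (logFrac (a + 1) (m + 1) (logFracDeriv a m P Q).1 (logFracDeriv a m P Q).2 r) r := by
  have hD : (48 : ℝ) + r ^ 2 ≠ 0 := by positivity
  have hnum : HasDerivAt (fun x => P.eval x + Q.eval x * log x)
      ((derivative P).eval r + ((derivative Q).eval r * log r + Q.eval r * r⁻¹)) r :=
    (P.hasDerivAt r).add ((Q.hasDerivAt r).mul (hasDerivAt_log hr.ne'))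
  have hden : HasDerivAt (fun x : ℝ => x ^ a * (48 + x ^ 2) ^ m)
      (a * r ^ a / r * 1 * (48 + r ^ 2) ^ m
        + r ^ a * (m * (48 + r ^ 2) ^ m / (48 + r ^ 2) * (2 * r))) r := by
    refine ((hasDerivAt_id r).fun_pow_of_ne_zero hr.ne' a).mul ?_
    refine HasDerivAt.fun_pow_of_ne_zero (f := fun x => 48 + x ^ 2) ?_ hD m
    simpa using ((hasDerivAt_pow 2 r).const_add 48)
  refine (hnum.div hden (by positivity)).congr_deriv ?_
  simp only [logFrac, logFracDeriv, eval_add, eval_mul, eval_sub, eval_X, eval_pow,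
    eval_natCast, eval_ofNat]
  field_simp
  ring

theorem tendsto_logFrac_mul_pow_nhdsGT_zero (hQ : Q.eval 0 = 0) :
    Tendsto (fun r => logFrac a m P Q r * r ^ a) (𝓝[>] 0) (𝓝 (P.eval 0 / 48 ^ m)) := by
  obtain ⟨R, rfl⟩ : X ∣ Q := X_dvd_iff.mpr (by rwa [coeff_zero_eq_eval_zero])
  have hcont : Continuous fun r => (P.eval r + R.eval r * (r * log r)) / (48 + r ^ 2) ^ m :=
    (P.continuous.add (R.continuous.mul continuous_mul_log)).div (by fun_prop)
      fun r => by positivity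
  have hlim := (hcont.tendsto 0).mono_left (nhdsWithin_le_nhds (s := Ioi 0))
  simp only [zero_mul, mul_zero, add_zero, ne_eq, OfNat.ofNat_ne_zero, not_false_eq_true,
    zero_pow] at hlim
  refine hlim.congr' ?_
  filter_upwards [self_mem_nhdsWithin] with r (hr : 0 < r)
  simp only [logFrac, eval_mul, eval_X]
  field_simp

theorem tendsto_logFrac_mul_pow_div_pow_atTop (N : ℕ) (hP : P.natDegree ≤ N + 1)
    (hQ : Q.natDegree ≤ N) :
    Tendsto (fun r => logFrac a m P Q r * r ^ (a + 2 * m) / r ^ (N + 1)) atTop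
      (𝓝 (P.coeff (N + 1))) := by
  have hlog : Tendsto (fun r : ℝ => log r / r) atTop (𝓝 0) := by
    simpa using Real.tendsto_pow_log_div_mul_add_atTop 1 0 1 one_ne_zero
  have hD : Tendsto (fun r : ℝ => (1 + 48 * r⁻¹ ^ 2) ^ m) atTop (𝓝 1) := by
    have hcont : Continuous fun x : ℝ => (1 + 48 * x ^ 2) ^ m := by fun_prop
    simpa [Function.comp_def] using (hcont.tendsto 0).comp tendsto_inv_atTop_zero
  have hlim := ((tendsto_eval_div_pow_atTop hP).add
    ((tendsto_eval_div_pow_atTop hQ).mul hlog)).div hD (by norm_num)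
  rw [mul_zero, add_zero, div_one] at hlim
  refine hlim.congr' ?_
  filter_upwards [eventually_gt_atTop 0] with r hr
  have hsplit : ((48 : ℝ) + r ^ 2) ^ m = r ^ (2 * m) * (1 + 48 * r⁻¹ ^ 2) ^ m := by
    rw [pow_mul, ← mul_pow]
    field_simp
    ring
  rw [Pi.div_apply, logFrac, hsplit]
  field_simp
  ring

def radialHNum : ℝ[X] × ℝ[X] :=
  let D : ℝ[X] := 48 + X ^ 2
  let d₁ := logFracDeriv a m P Q
  let d₂ := logFracDeriv (a + 1) (m + 1) d₁.1 d₁.2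
  (-d₂.1 - 7 * D * d₁.1 - 3840 * X ^ 2 * P, -d₂.2 - 7 * D * d₁.2 - 3840 * X ^ 2 * Q)

theorem radialH_logFrac {r : ℝ} (hr : 0 < r) :
    radialH (logFrac a m P Q) r =
      logFrac (a + 2) (m + 2) (radialHNum a m P Q).1 (radialHNum a m P Q).2 r := by
  set d₁ := logFracDeriv a m P Q
  have hderiv : deriv (logFrac a m P Q) =ᶠ[𝓝 r] logFrac (a + 1) (m + 1) d₁.1 d₁.2 := by
    filter_upwards [eventually_gt_nhds hr] with x hx
    exact (hasDerivAt_logFrac a m P Q hx).deriv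
  have hD : (48 : ℝ) + r ^ 2 ≠ 0 := by positivity
  rw [radialH, hderiv.deriv_eq, hderiv.eq_of_nhds, (hasDerivAt_logFrac _ _ _ _ hr).deriv, V8r_eq]
  simp only [logFrac, radialHNum, d₁, eval_add, eval_mul, eval_sub, eval_neg, eval_X, eval_pow,
    eval_ofNat]
  field_simp
  ring

end LogFrac

def gammaP : ℝ[X] :=
  C 587068342272 + C 171228266496 * X ^ 2 + C 32105299968 * X ^ 4 + C 334430208 * X ^ 6
    - C 123088896 * X ^ 8 + C 290304 * X ^ 10 + C 672 * X ^ 12 + X ^ 14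

def gammaQ : ℝ[X] := C 92897280 * X ^ 6 * (X ^ 2 - 48)

def t1InfP : ℝ[X] :=
  C (587068342272 / 7) + C 24461180928 * X ^ 2 + C 4586471424 * X ^ 4 + C 47775744 * X ^ 6
    - C 16588800 * X ^ 8 + C 41472 * X ^ 10

def t1InfQ : ℝ[X] := C 13271040 * X ^ 6 * (X ^ 2 - 48)

def t1ZeroP : ℝ[X] :=
  - C 73383542784 - C 36691771392 * X ^ 2 + C 524427264 * X ^ 6 - C 4492800 * X ^ 8
    - C 48704 * X ^ 10 - C (91 / 3) * X ^ 12 + C (1 / 16) * X ^ 14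

def t1ZeroQ : ℝ[X] :=
  C 11041505280 * X ^ 4 - C 508723200 * X ^ 6 + C 26880 * X ^ 10 + C 40 * X ^ 12

def gammaSubT1InfP : ℝ[X] := X ^ 6 + C 672 * X ^ 4 - C 6967296

def gamma : ℝ → ℝ := logFrac 6 4 gammaP gammaQ

def t1Inf : ℝ → ℝ := logFrac 6 4 t1InfP t1InfQ

def t1Zero : ℝ → ℝ := logFrac 4 4 t1ZeroP t1ZeroQ

theorem radialHNum_gamma : radialHNum 6 4 gammaP gammaQ = (0, 0) := by
  ext1 <;> refine Polynomial.funext fun x => ?_ <;>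
    simp only [radialHNum, logFracDeriv, gammaP, gammaQ, derivative_add, derivative_sub,
      derivative_mul, derivative_C, derivative_X, derivative_X_pow,
      derivative_ofNat, derivative_zero, eval_one, eval_add, eval_sub, eval_neg, eval_mul, eval_pow,
      eval_X, eval_C, eval_ofNat, eval_natCast, eval_zero, Nat.cast_ofNat] <;>
    ring

theorem radialHNum_t1Inf : radialHNum 6 4 t1InfP t1InfQ =
    (-(C 331776 * X ^ 8 * (48 + X ^ 2) ^ 2 * (48 - X ^ 2)), 0) := by
  ext1 <;> refine Polynomial.funext fun x => ?_ <;>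
    simp only [radialHNum, logFracDeriv, t1InfP, t1InfQ, derivative_add, derivative_sub,
      derivative_mul, derivative_C, derivative_X, derivative_X_pow,
      derivative_ofNat, derivative_zero, eval_one, eval_add, eval_sub, eval_neg, eval_mul, eval_pow,
      eval_X, eval_C, eval_ofNat, eval_natCast, eval_zero, Nat.cast_ofNat] <;>
    ring

theorem radialHNum_t1Zero : radialHNum 4 4 t1ZeroP t1ZeroQ =
    (-((48 + X ^ 2) ^ 2 * gammaP), -((48 + X ^ 2) ^ 2 * gammaQ)) := by
  ext1 <;> refine Polynomial.funext fun x => ?_ <;>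
    simp only [radialHNum, logFracDeriv, t1ZeroP, t1ZeroQ, gammaP, gammaQ, derivative_add,
      derivative_sub, derivative_neg, derivative_mul, derivative_C, derivative_X,
      derivative_X_pow, derivative_ofNat, derivative_zero, eval_one, eval_add, eval_sub, eval_neg,
      eval_mul, eval_pow, eval_X, eval_C, eval_ofNat, eval_natCast, eval_zero,
      Nat.cast_ofNat] <;>
    ring

theorem radialH_gamma {r : ℝ} (hr : 0 < r) : radialH gamma r = 0 := by
  rw [gamma, radialH_logFrac _ _ _ _ hr, radialHNum_gamma]
  simp [logFrac]

theorem radialH_t1Inf {r : ℝ} (hr : 0 < r) : radialH t1Inf r = -LW8r r := by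
  rw [t1Inf, radialH_logFrac _ _ _ _ hr, radialHNum_t1Inf, LW8r_eq]
  simp only [logFrac, eval_neg, eval_mul, eval_sub, eval_add, eval_pow, eval_X, eval_C,
    eval_ofNat, eval_zero]
  field_simp
  ring

theorem radialH_t1Zero {r : ℝ} (hr : 0 < r) : radialH t1Zero r = -gamma r := by
  rw [t1Zero, radialH_logFrac _ _ _ _ hr, radialHNum_t1Zero, gamma]
  simp only [logFrac, eval_neg, eval_mul, eval_add, eval_pow, eval_X, eval_ofNat]
  field_simp
  ring

theorem gamma_sub_t1Inf_div_sq {r : ℝ} (hr : r ≠ 0) :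
    (gamma r - 7 * t1Inf r) / r ^ 2 = logFrac 0 4 gammaSubT1InfP 0 r := by
  simp only [gamma, t1Inf, logFrac, gammaP, gammaQ, t1InfP, t1InfQ, gammaSubT1InfP, eval_add,
    eval_sub, eval_mul, eval_pow, eval_X, eval_C, eval_ofNat, eval_zero]
  field_simp
  ring

theorem tendsto_gamma_mul_pow_six : Tendsto (fun r => gamma r * r ^ 6) (𝓝[>] 0) (𝓝 110592) := by
  have h := tendsto_logFrac_mul_pow_nhdsGT_zero 6 4 gammaP gammaQ (by simp [gammaQ])
  rwa [show gammaP.eval 0 / 48 ^ 4 = (110592 : ℝ) by norm_num [gammaP]] at h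

theorem tendsto_t1Inf_mul_pow_six :
    Tendsto (fun r => t1Inf r * r ^ 6) (𝓝[>] 0) (𝓝 (110592 / 7)) := by
  have h := tendsto_logFrac_mul_pow_nhdsGT_zero 6 4 t1InfP t1InfQ (by simp [t1InfQ])
  rwa [show t1InfP.eval 0 / 48 ^ 4 = (110592 / 7 : ℝ) by norm_num [t1InfP]] at h

theorem tendsto_t1Zero_mul_pow_four :
    Tendsto (fun r => t1Zero r * r ^ 4) (𝓝[>] 0) (𝓝 (-13824)) := by
  have h := tendsto_logFrac_mul_pow_nhdsGT_zero 4 4 t1ZeroP t1ZeroQ (by simp [t1ZeroQ])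
  rwa [show t1ZeroP.eval 0 / 48 ^ 4 = (-13824 : ℝ) by norm_num [t1ZeroP]] at h

theorem tendsto_gamma_sub_t1Inf_div_sq :
    Tendsto (fun r => (gamma r - 7 * t1Inf r) / r ^ 2) (𝓝[>] 0) (𝓝 (-21 / 16)) := by
  have h := tendsto_logFrac_mul_pow_nhdsGT_zero 0 4 gammaSubT1InfP 0 eval_zero
  rw [show gammaSubT1InfP.eval 0 / 48 ^ 4 = (-21 / 16 : ℝ) by norm_num [gammaSubT1InfP]] at h
  refine h.congr' ?_
  filter_upwards [self_mem_nhdsWithin] with r (hr : 0 < r)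
  rw [pow_zero, mul_one, gamma_sub_t1Inf_div_sq hr.ne']

theorem tendsto_gamma_atTop : Tendsto gamma atTop (𝓝 1) := by
  have h := tendsto_logFrac_mul_pow_div_pow_atTop 6 4 gammaP gammaQ 13
    (by unfold gammaP; compute_degree!) (by unfold gammaQ; compute_degree!)
  rw [show gammaP.coeff (13 + 1) = 1 by simp [gammaP, coeff_X_pow]] at h
  refine h.congr' ?_
  filter_upwards [eventually_gt_atTop 0] with r hr
  rw [gamma]
  field_simp

theorem tendsto_t1Inf_mul_pow_four : Tendsto (fun r => t1Inf r * r ^ 4) atTop (𝓝 41472) := by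
  have h := tendsto_logFrac_mul_pow_div_pow_atTop 6 4 t1InfP t1InfQ 9
    (by unfold t1InfP; compute_degree!) (by unfold t1InfQ; compute_degree!)
  rw [show t1InfP.coeff (9 + 1) = 41472 by simp [t1InfP, coeff_X_pow]] at h
  refine h.congr' ?_
  filter_upwards [eventually_gt_atTop 0] with r hr
  rw [t1Inf]
  field_simp
  ring

theorem tendsto_t1Zero_div_sq : Tendsto (fun r => t1Zero r / r ^ 2) atTop (𝓝 (1 / 16)) := by
  have h := tendsto_logFrac_mul_pow_div_pow_atTop 4 4 t1ZeroP t1ZeroQ 13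
    (by unfold t1ZeroP; compute_degree!) (by unfold t1ZeroQ; compute_degree!)
  rw [show t1ZeroP.coeff (13 + 1) = 1 / 16 by simp [t1ZeroP, coeff_X_pow]] at h
  refine h.congr' ?_
  filter_upwards [eventually_gt_atTop 0] with r hr
  rw [t1Zero]
  field_simp
  ring

/-- Generalized kernel of `-Δ + V` in eight dimensions, in the radial setting. -/
theorem stmt18 :
    ∃ (G T1i T10 : ℝ → ℝ) (c c' ci0 cii c00 c0i E0 ct : ℝ),
      c ≠ 0 ∧ c' ≠ 0 ∧ ci0 ≠ 0 ∧ cii ≠ 0 ∧ c00 ≠ 0 ∧ c0i ≠ 0 ∧ E0 ≠ 0 ∧ ct ≠ 0 ∧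
      (∀ r : ℝ, 0 < r →
        -(deriv (deriv G) r) - 7 / r * deriv G r + V8r r * G r = 0) ∧
      Tendsto (fun r => G r * r ^ 6) (𝓝[>] (0 : ℝ)) (𝓝 c) ∧
      Tendsto G atTop (𝓝 c') ∧
      (∀ r : ℝ, 0 < r →
        -(deriv (deriv T1i) r) - 7 / r * deriv T1i r + V8r r * T1i r = -LW8r r) ∧
      (∀ r : ℝ, 0 < r →
        -(deriv (deriv T10) r) - 7 / r * deriv T10 r + V8r r * T10 r = -G r) ∧
      Tendsto (fun r => T1i r * r ^ 4) atTop (𝓝 cii) ∧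
      Tendsto (fun r => T1i r * r ^ 6) (𝓝[>] (0 : ℝ)) (𝓝 ci0) ∧
      Tendsto (fun r => T10 r / r ^ 2) atTop (𝓝 c0i) ∧
      Tendsto (fun r => T10 r * r ^ 4) (𝓝[>] (0 : ℝ)) (𝓝 c00) ∧
      Tendsto (fun r => (G r - E0 * T1i r) / r ^ 2) (𝓝[>] (0 : ℝ)) (𝓝 ct) :=
  ⟨gamma, t1Inf, t1Zero, 110592, 1, 110592 / 7, 41472, -13824, 1 / 16, 7, -21 / 16,
    by norm_num, by norm_num, by norm_num, by norm_num, by norm_num, by norm_num, by norm_num,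
    by norm_num, fun _ hr => radialH_gamma hr, tendsto_gamma_mul_pow_six, tendsto_gamma_atTop,
    fun _ hr => radialH_t1Inf hr, fun _ hr => radialH_t1Zero hr, tendsto_t1Inf_mul_pow_four,
    tendsto_t1Inf_mul_pow_six, tendsto_t1Zero_div_sq, tendsto_t1Zero_mul_pow_four,
    tendsto_gamma_sub_t1Inf_div_sq⟩

end
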